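/- Under monotonic filtering after the source switch, for every time t and every distance level x < t, the sum of accumulates over nodes at distance x from the new source 0 satisfies: sum over i ∈ F_0(x) of a_i(t) ≤ N + sum over y from x to D-1 of |F_0(y)|, where F_0(y) = {i : d(0,i) = y} and N = |V|. -/

import Mathlib

/-!
After the switch the estimates `dh t` run Bellman–Ford from `z`: they never undershoot
`min (d(z, i)) t` and are exact on the ball of radius `t - 1`, while ahead of the new wavefront
the old estimates can only grow (`dh s j ≤ max (dh (s + 1) j) (s + 2)`). Since the filtering
condition attaches each node to at most one parent one level up, the accumulate sum of level `m`
at time `t` is at most the size of that level plus the sum of level `m + 1` at time `t - 1`.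
Following this recursion backwards, a level ahead of the wavefront is charged only to nodes that
are still ahead of it or already settled, so to at most `N` nodes (at time `0` this is the steady
state, where level `m` is charged to the nodes of level `≥ m`). A settled level `x` thus receives
at most `N` from the old region plus one unit for each node at distance `≥ x` from `z`.
-/

open Finset

namespace SimpleGraph

variable {V : Type*} {G : SimpleGraph V}

lemma Adj.dist_le_dist_add_one {v w : V} (h : G.Adj v w) (u : V) :
    G.dist u v ≤ G.dist u w + 1 := by
  rcases h.symm.diff_dist_adj (u := u) with h | h | h <;> omega

lemma Reachable.exists_adj_dist_add_one_eq {u v : V} (h : G.Reachable u v) (huv : u ≠ v) :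
    ∃ w, G.Adj u w ∧ G.dist v w + 1 = G.dist v u := by
  obtain ⟨p, hp⟩ := h.exists_walk_length_eq_dist
  cases p with
  | nil => exact absurd rfl huv
  | @cons _ w _ hadj q =>
    refine ⟨w, hadj, ?_⟩
    have hq : G.dist w v ≤ q.length := dist_le q
    have hw := hadj.dist_le_dist_add_one v
    rw [Walk.length_cons] at hp
    have := G.dist_comm (u := w) (v := v)
    have := G.dist_comm (u := u) (v := v)
    omega

end SimpleGraph

section Levels

lemma card_filter_add_card_filter_le {α : Type*} [DecidableEq α] (s : Finset α)
    {p q r : α → Prop} [DecidablePred p] [DecidablePred q] [DecidablePred r]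
    (hpq : ∀ i, p i → ¬q i) (hr : ∀ i, p i ∨ q i → r i) :
    #(s.filter p) + #(s.filter q) ≤ #(s.filter r) := by
  rw [← card_union_of_disjoint (disjoint_filter.mpr fun i _ => hpq i), ← filter_or]
  exact card_le_card (monotone_filter_right s fun i _ => hr i)

variable {V : Type*} [Fintype V]

lemma sum_filter_eq_le_card_add_sum_filter_eq_succ [DecidableEq V] {d d' : V → ℕ} {f : V → V}
    {a a' : V → ℕ}
    (ha : ∀ i, a i = 1 + ∑ j with f j = i ∧ d' j = d i + 1, a' j) (m : ℕ) :
    ∑ i with d i = m, a i ≤ #{i | d i = m} + ∑ j with d' j = m + 1, a' j := by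
  have hchildren : ∀ i ∈ ({i | d i = m} : Finset V),
      a i = 1 + ∑ j ∈ {j | d' j = m + 1} with f j = i, a' j := by
    intro i hi
    rw [ha i, (mem_filter.mp hi).2, filter_filter]
    simp only [and_comm]
  rw [sum_congr rfl hchildren, sum_add_distrib, sum_const, smul_eq_mul, mul_one,
    sum_fiberwise_eq_sum_filter]
  exact Nat.add_le_add_left (sum_le_sum_of_subset (filter_subset _ _)) _

lemma sum_filter_eq_le_card_filter_le [DecidableEq V] {d : V → ℕ} {f : V → V} {a : V → ℕ}
    (ha : ∀ i, a i = 1 + ∑ j with f j = i ∧ d j = d i + 1, a j) (m : ℕ) :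
    ∑ i with d i = m, a i ≤ #{i | m ≤ d i} := by
  suffices h : ∀ k m, (∀ i, d i < m + k) → ∑ i with d i = m, a i ≤ #{i | m ≤ d i} from
    h (univ.sup d + 1) m fun i => by have := le_sup (f := d) (mem_univ i); omega
  intro k
  induction k with
  | zero =>
    intro m hm
    rw [filter_false_of_mem fun i _ => by have := hm i; omega, sum_empty]
    exact Nat.zero_le _
  | succ k ih =>
    intro m hm
    calc ∑ i with d i = m, a i ≤ #{i | d i = m} + ∑ j with d j = m + 1, a j :=
          sum_filter_eq_le_card_add_sum_filter_eq_succ ha m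
      _ ≤ #{i | d i = m} + #{i | m + 1 ≤ d i} := by
          gcongr
          exact ih (m + 1) fun i => by have := hm i; omega
      _ ≤ #{i | m ≤ d i} := card_filter_add_card_filter_le _ (by omega) (by omega)

lemma card_filter_le_eq_sum_card_filter_eq {f : V → ℕ} {D : ℕ} (hf : ∀ i, f i < D)
    (x : ℕ) :
    #{i | x ≤ f i} = ∑ y ∈ Icc x (D - 1), #{i | f i = y} := by
  rw [sum_card_fiberwise_eq_card_filter]
  congr 1
  ext i
  have := hf i
  simp only [mem_filter, mem_univ, true_and, mem_Icc]
  omega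

end Levels

section MonotonicFiltering

variable {V : Type*} [Fintype V] {G : SimpleGraph V} [DecidableRel G.Adj]
  {hne : ∀ i : V, (G.neighborFinset i).Nonempty} {z : V} {dh : ℕ → V → ℕ}

lemma estimate_le_of_adj
    (hupd : ∀ t, 1 ≤ t → ∀ i, i ≠ z →
      dh t i = 1 + (G.neighborFinset i).inf' (hne i) (fun j => dh (t - 1) j))
    {t : ℕ} (ht : 1 ≤ t) {i j : V} (hi : i ≠ z) (hij : G.Adj i j) :
    dh t i ≤ dh (t - 1) j + 1 := by
  have := inf'_le (fun j => dh (t - 1) j) ((G.mem_neighborFinset i j).mpr hij)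
  rw [hupd t ht i hi]
  omega

lemma exists_adj_estimate_eq
    (hupd : ∀ t, 1 ≤ t → ∀ i, i ≠ z →
      dh t i = 1 + (G.neighborFinset i).inf' (hne i) (fun j => dh (t - 1) j))
    {t : ℕ} (ht : 1 ≤ t) {i : V} (hi : i ≠ z) :
    ∃ j, G.Adj i j ∧ dh t i = dh (t - 1) j + 1 := by
  obtain ⟨j, hj, hmin⟩ := exists_mem_eq_inf' (hne i) (fun j => dh (t - 1) j)
  refine ⟨j, (G.mem_neighborFinset i j).mp hj, ?_⟩
  rw [hupd t ht i hi, hmin]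
  omega

lemma min_dist_le_estimate
    (hupd : ∀ t, 1 ≤ t → ∀ i, i ≠ z →
      dh t i = 1 + (G.neighborFinset i).inf' (hne i) (fun j => dh (t - 1) j))
    (t : ℕ) (i : V) : min (G.dist z i) t ≤ dh t i := by
  induction t generalizing i with
  | zero => simp
  | succ t ih =>
    by_cases hi : i = z
    · simp [hi]
    obtain ⟨j, hij, hj⟩ := exists_adj_estimate_eq hupd le_add_self hi
    have := ih j
    have := hij.dist_le_dist_add_one z
    rw [hj, Nat.add_sub_cancel]
    omega

lemma estimate_eq_dist_of_dist_lt (hconn : G.Connected)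
    (hsrc : ∀ t, 1 ≤ t → dh t z = 0)
    (hupd : ∀ t, 1 ≤ t → ∀ i, i ≠ z →
      dh t i = 1 + (G.neighborFinset i).inf' (hne i) (fun j => dh (t - 1) j))
    {t : ℕ} {i : V} (hit : G.dist z i < t) : dh t i = G.dist z i := by
  induction t generalizing i with
  | zero => omega
  | succ t ih =>
    by_cases hi : i = z
    · rw [hi, hsrc _ le_add_self, SimpleGraph.dist_self]
    obtain ⟨j, hij, hj⟩ := (hconn i z).exists_adj_dist_add_one_eq hi
    have hjt := ih (i := j) (by omega)
    have hij' := estimate_le_of_adj hupd (t := t + 1) le_add_self hi hij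
    have := min_dist_le_estimate hupd (t + 1) i
    rw [Nat.add_sub_cancel] at hij'
    omega

lemma filter_dist_eq_eq_filter_estimate_eq (hconn : G.Connected)
    (hsrc : ∀ t, 1 ≤ t → dh t z = 0)
    (hupd : ∀ t, 1 ≤ t → ∀ i, i ≠ z →
      dh t i = 1 + (G.neighborFinset i).inf' (hne i) (fun j => dh (t - 1) j))
    {t x : ℕ} (hxt : x < t) :
    ({i | G.dist z i = x} : Finset V) = ({i | dh t i = x} : Finset V) := by
  ext i
  simp only [mem_filter, mem_univ, true_and]
  by_cases hit : G.dist z i < t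
  · rw [estimate_eq_dist_of_dist_lt hconn hsrc hupd hit]
  · have := min_dist_le_estimate hupd t i
    omega

lemma estimate_le_max_estimate_succ {o : V} (hinit : ∀ i, dh 0 i = G.dist o i)
    (hsrc : ∀ t, 1 ≤ t → dh t z = 0)
    (hupd : ∀ t, 1 ≤ t → ∀ i, i ≠ z →
      dh t i = 1 + (G.neighborFinset i).inf' (hne i) (fun j => dh (t - 1) j))
    {s : ℕ} {j : V} (hj : s + 1 ≤ dh (s + 1) j) : dh s j ≤ max (dh (s + 1) j) (s + 2) := by
  have hz : ∀ {s}, dh (s + 1) z = 0 := hsrc _ le_add_self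
  induction s generalizing j with
  | zero =>
    have hjz : j ≠ z := by rintro rfl; rw [hz] at hj; omega
    obtain ⟨p, hjp, hp⟩ := exists_adj_estimate_eq hupd (t := 1) le_rfl hjz
    have := hjp.dist_le_dist_add_one o
    rw [hinit, hp, hinit]
    omega
  | succ s ih =>
    have hjz : j ≠ z := by rintro rfl; rw [hz] at hj; omega
    obtain ⟨p, hjp, hp⟩ := exists_adj_estimate_eq hupd (t := s + 1 + 1) le_add_self hjz
    have hpj := estimate_le_of_adj hupd (t := s + 1) le_add_self hjz hjp
    rw [Nat.add_sub_cancel] at hp hpj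
    have := ih (j := p) (by omega)
    omega

variable [DecidableEq V] {c : ℕ → V → V} {a : ℕ → V → ℕ}

lemma sum_estimate_eq_le_card_of_lt (hconn : G.Connected) {o : V}
    (hinit : ∀ i, dh 0 i = G.dist o i)
    (hsrc : ∀ t, 1 ≤ t → dh t z = 0)
    (hupd : ∀ t, 1 ≤ t → ∀ i, i ≠ z →
      dh t i = 1 + (G.neighborFinset i).inf' (hne i) (fun j => dh (t - 1) j))
    (ha : ∀ t i, a t i =
      1 + ∑ j with c (t - 1) j = i ∧ dh (t - 1) j = dh t i + 1, a (t - 1) j)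
    {t m : ℕ} (htm : t < m) :
    ∑ i with dh t i = m, a t i ≤ #{j | m ≤ dh t j ∨ G.dist z j < t} := by
  induction t generalizing m with
  | zero =>
    -- `0 - 1 = 0`, so `ha 0` is the steady-state recursion of `a 0` along `dh 0`.
    simpa only [Nat.not_lt_zero, or_false] using sum_filter_eq_le_card_filter_le (ha 0) m
  | succ t ih =>
    calc ∑ i with dh (t + 1) i = m, a (t + 1) i
        ≤ #{i | dh (t + 1) i = m} + ∑ j with dh t j = m + 1, a t j :=
          sum_filter_eq_le_card_add_sum_filter_eq_succ (ha (t + 1)) m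
      _ ≤ #{i | dh (t + 1) i = m} + #{j | m + 1 ≤ dh t j ∨ G.dist z j < t} := by
          gcongr
          exact ih (by omega)
      _ ≤ #{i | dh (t + 1) i = m} + #{j | m + 1 ≤ dh (t + 1) j ∨ G.dist z j < t + 1} := by
          apply Nat.add_le_add_left (card_le_card (monotone_filter_right _ _))
          intro j _ hj
          by_cases hjt : G.dist z j < t + 1
          · exact Or.inr hjt
          have := min_dist_le_estimate hupd (t + 1) j
          have := estimate_le_max_estimate_succ hinit hsrc hupd (s := t) (j := j) (by omega)
          omega
      _ ≤ #{j | m ≤ dh (t + 1) j ∨ G.dist z j < t + 1} := by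
          refine card_filter_add_card_filter_le _ (fun j hj hj' => ?_) (fun j => by omega)
          have := estimate_eq_dist_of_dist_lt hconn hsrc hupd (t := t + 1) (i := j)
          omega

lemma sum_estimate_eq_le_card_add_card_dist_ge (hconn : G.Connected) {o : V}
    (hinit : ∀ i, dh 0 i = G.dist o i)
    (hsrc : ∀ t, 1 ≤ t → dh t z = 0)
    (hupd : ∀ t, 1 ≤ t → ∀ i, i ≠ z →
      dh t i = 1 + (G.neighborFinset i).inf' (hne i) (fun j => dh (t - 1) j))
    (ha : ∀ t i, a t i =
      1 + ∑ j with c (t - 1) j = i ∧ dh (t - 1) j = dh t i + 1, a (t - 1) j)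
    {t x : ℕ} (hxt : x ≤ t) :
    ∑ i with dh t i = x, a t i ≤ Fintype.card V + #{j | x ≤ G.dist z j} := by
  induction t generalizing x with
  | zero =>
    exact (sum_filter_eq_le_card_filter_le (ha 0) x).trans ((card_le_univ _).trans le_self_add)
  | succ t ih =>
    have hexp := sum_filter_eq_le_card_add_sum_filter_eq_succ (ha (t + 1)) x
    rw [Nat.add_sub_cancel] at hexp
    rcases Nat.lt_or_ge x t with hsettled | hfront
    · have hnext := ih (x := x + 1) hsettled
      have hlevel : #{i | dh (t + 1) i = x} = #{j | G.dist z j = x} := by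
        rw [filter_dist_eq_eq_filter_estimate_eq hconn hsrc hupd (t := t + 1) (by omega)]
      have := card_filter_add_card_filter_le univ (p := fun j => G.dist z j = x)
        (q := fun j => x + 1 ≤ G.dist z j) (r := fun j => x ≤ G.dist z j) (by omega) (by omega)
      omega
    · have hold := (sum_estimate_eq_le_card_of_lt hconn hinit hsrc hupd ha
        (t := t) (m := x + 1) (by omega)).trans (card_le_univ _)
      have hcard : #{i | dh (t + 1) i = x} ≤ #{j | x ≤ G.dist z j} := by
        refine card_le_card (monotone_filter_right _ fun j _ hj => ?_)
        have := estimate_eq_dist_of_dist_lt hconn hsrc hupd (t := t + 1) (i := j)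
        omega
      omega

end MonotonicFiltering

theorem monotonic_filtering_level_bound_general {V : Type*} [Fintype V] [DecidableEq V]
    (G : SimpleGraph V) [DecidableRel G.Adj] (hconn : G.Connected) (z o : V)
    (D : ℕ)
    (hD : ∀ i, G.dist z i < D)
    (hne : ∀ i : V, (G.neighborFinset i).Nonempty)
    (dh : ℕ → V → ℕ) (c : ℕ → V → V) (a : ℕ → V → ℕ)
    (hinit : ∀ i, dh 0 i = G.dist o i)
    (hsrc : ∀ t, 1 ≤ t → dh t z = 0)
    (hupd : ∀ t, 1 ≤ t → ∀ i, i ≠ z →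
      dh t i = 1 + (G.neighborFinset i).inf' (hne i) (fun j => dh (t - 1) j))
    (ha : ∀ t i, a t i = 1 +
      ∑ j ∈ Finset.univ.filter
          (fun j => c (t - 1) j = i ∧ dh (t - 1) j = dh t i + 1), a (t - 1) j) :
    ∀ t x, x < t →
      ∑ i ∈ Finset.univ.filter (fun i => G.dist z i = x), a t i
        ≤ Fintype.card V +
          ∑ y ∈ Finset.Icc x (D - 1),
            (Finset.univ.filter (fun i => G.dist z i = y)).card := by
  intro t x hxt
  rw [← card_filter_le_eq_sum_card_filter_eq hD,
    filter_dist_eq_eq_filter_estimate_eq hconn hsrc hupd hxt]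
  exact sum_estimate_eq_le_card_add_card_dist_ge hconn hinit hsrc hupd ha hxt.le

/-- Monotonic filtering after a source switch from `o` (= node `D-1`) to `z`
(= node `0`), with effective diameter `D` (every node is within distance `D-1`
of `z` and `d(z,o) = D-1 ≥ 3`), initialized at the steady state for source `o`:
for every time `t` and distance level `x < t`,
`Σ_{i ∈ F_0(x)} a_i(t) ≤ N + Σ_{y=x}^{D-1} |F_0(y)|`
where `F_0(y) = {i : d(z,i) = y}` and `N = |V|`. -/
theorem monotonic_filtering_level_bound {V : Type*} [Fintype V] [DecidableEq V]
    (G : SimpleGraph V) [DecidableRel G.Adj] (hconn : G.Connected) (z o : V)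
    (D : ℕ) (hzo : 3 ≤ G.dist z o) (hDo : G.dist z o = D - 1)
    (hD : ∀ i, G.dist z i < D)
    (hne : ∀ i : V, (G.neighborFinset i).Nonempty)
    (dh : ℕ → V → ℕ) (c : ℕ → V → V) (a : ℕ → V → ℕ)
    (hinit : ∀ i, dh 0 i = G.dist o i)
    (hsrc : ∀ t, 1 ≤ t → dh t z = 0)
    (hupd : ∀ t, 1 ≤ t → ∀ i, i ≠ z →
      dh t i = 1 + (G.neighborFinset i).inf' (hne i) (fun j => dh (t - 1) j))
    (hc0s : c 0 o = o)
    (hc0 : ∀ i, i ≠ o → G.Adj i (c 0 i) ∧ dh 0 i = 1 + dh 0 (c 0 i))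
    (hcs : ∀ t, 1 ≤ t → c t z = z)
    (hc : ∀ t, 1 ≤ t → ∀ i, i ≠ z →
      G.Adj i (c t i) ∧ dh t i = 1 + dh (t - 1) (c t i))
    (ha : ∀ t i, a t i = 1 +
      ∑ j ∈ Finset.univ.filter
          (fun j => c (t - 1) j = i ∧ dh (t - 1) j = dh t i + 1), a (t - 1) j)
    (hlevel : ∀ m : ℕ,
      ∑ j ∈ Finset.univ.filter (fun j => G.dist o j = m), a 0 j ≤ Fintype.card V) :
    ∀ t x, x < t →
      ∑ i ∈ Finset.univ.filter (fun i => G.dist z i = x), a t i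
        ≤ Fintype.card V +
          ∑ y ∈ Finset.Icc x (D - 1),
            (Finset.univ.filter (fun i => G.dist z i = y)).card :=
  monotonic_filtering_level_bound_general G hconn z o D hD hne dh c a hinit hsrc hupd ha
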